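/- Let S = (H, w, μ) be a summary, q a CQ with res(q) ⊆ dom(μ), τ an answer to μ(q) on H, and P a partition in B_τ. Then for every τ-expansion π to P (π ∈ Exp_τ(P)), there is exactly one partition P' ∈ B_τ such that P ⪯ P' and π ∈ MaxExp_τ(P'). -/

import Mathlib

/- ## Basic RDF notions -/

attribute [local instance] Classical.propDecidable

/-- A term is a resource or a variable. -/
inductive Term (R V : Type) where
  | res : R → Term R V
  | var : V → Term R V
deriving DecidableEq

/-- An atom is a triple of terms. -/
abbrev Atom (R V : Type) := Term R V × Term R V × Term R V

/-- An RDF graph is a finite set of triples of resources. -/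
abbrev RDFGraph (R : Type) := Finset (R × R × R)

/-- A conjunctive query is a finite set of atoms. -/
abbrev CQ (R V : Type) := Finset (Atom R V)

variable {R V : Type} [DecidableEq R] [DecidableEq V]

/-- The resources occurring in an RDF graph. -/
def graphRes (G : RDFGraph R) : Finset R :=
  G.image (fun t => t.1) ∪ G.image (fun t => t.2.1) ∪ G.image (fun t => t.2.2)

/-- A summary `S = (H, w, μ)`: a summarisation graph `H`, a weight function `w`
positive on `H`, and a summarisation function `μ` defined on a finite set `dom` of
resources, surjective onto the resources of `H` (the buckets). -/
structure Summary (R : Type) [DecidableEq R] where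
  H : RDFGraph R
  w : R × R × R → ℕ
  dom : Finset R
  μ : R → R
  w_pos : ∀ h ∈ H, 0 < w h
  surj : ∀ b ∈ graphRes H, ∃ r ∈ dom, μ r = b

/-- Application of `μ` to a resource (resources outside `dom μ` are left unchanged). -/
def appMu (S : Summary R) (r : R) : R := if r ∈ S.dom then S.μ r else r

/-- Application of `μ` to a triple of resources. -/
def muT (S : Summary R) (t : R × R × R) : R × R × R :=
  (appMu S t.1, appMu S t.2.1, appMu S t.2.2)

/-- The `S`-size of a bucket: the number of resources mapped to it. -/
def size1 (S : Summary R) (b : R) : ℕ := (S.dom.filter (fun r => S.μ r = b)).card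

/-- The `S`-size of a triple of buckets. -/
def size3 (S : Summary R) (h : R × R × R) : ℕ := size1 S h.1 * size1 S h.2.1 * size1 S h.2.2

/-- `S` represents the RDF graph `G`. -/
def represents (S : Summary R) (G : RDFGraph R) : Prop :=
  graphRes G ⊆ S.dom ∧ S.H = G.image (muT S) ∧
    ∀ h ∈ S.H, S.w h = (G.filter (fun t => muT S t = h)).card

/-- `⟦S⟧`: the set of all RDF graphs represented by `S`. -/
def worlds (S : Summary R) : Set (RDFGraph R) := {G | represents S G}

/-- A summary is consistent if it represents at least one graph. -/
def consistent (S : Summary R) : Prop := (worlds S).Nonempty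

/- ## Queries, substitutions and answers -/

def varsT : Term R V → Finset V
  | .res _ => ∅
  | .var x => {x}

def resT : Term R V → Finset R
  | .res r => {r}
  | .var _ => ∅

def varsA (a : Atom R V) : Finset V := varsT a.1 ∪ varsT a.2.1 ∪ varsT a.2.2

def resA (a : Atom R V) : Finset R := resT a.1 ∪ resT a.2.1 ∪ resT a.2.2

/-- The variables of a CQ. -/
def varsQ (q : CQ R V) : Finset V := q.biUnion varsA

/-- The resources of a CQ. -/
def resQ (q : CQ R V) : Finset R := q.biUnion resA

/-- The terms of a CQ. -/
def termsQ (q : CQ R V) : Finset (Term R V) := q.biUnion (fun a => {a.1, a.2.1, a.2.2})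

/-- A substitution (a partial map from variables to resources) applied to a term. -/
def appT (π : V → Option R) : Term R V → Option R
  | .res r => some r
  | .var x => π x

/-- Application of a substitution to a term, with a default value (only used when the
substitution is undefined on a variable of the term). -/
def appTD [Inhabited R] (π : V → Option R) (t : Term R V) : R := (appT π t).getD default

/-- Application of a substitution to an atom. -/
def appAtomD [Inhabited R] (π : V → Option R) (a : Atom R V) : R × R × R :=
  (appTD π a.1, appTD π a.2.1, appTD π a.2.2)

/-- `ans(q, G)`: the answers to the CQ `q` on the graph `G`, i.e. substitutions whose
domain is exactly `var(q)` and which map every atom of `q` into `G`. -/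
def ansSet [Inhabited R] (q : CQ R V) (G : RDFGraph R) : Set (V → Option R) :=
  {π | (∀ x, (π x).isSome ↔ x ∈ varsQ q) ∧ ∀ a ∈ q, appAtomD π a ∈ G}

/-- `E_S[q]`: the expected cardinality of `q` over the graphs represented by `S`. -/
noncomputable def expect [Inhabited R] (S : Summary R) (q : CQ R V) : ℝ :=
  (∑ᶠ G ∈ worlds S, ((ansSet q G).ncard : ℝ)) / ((worlds S).ncard : ℝ)

/-- `v_S[q]`: the variance of the cardinality of `q` over the graphs represented by `S`. -/
noncomputable def varq [Inhabited R] (S : Summary R) (q : CQ R V) : ℝ :=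
  (∑ᶠ G ∈ worlds S, (((ansSet q G).ncard : ℝ) - expect S q) ^ 2) / ((worlds S).ncard : ℝ)

/-- `μ` applied to a term. -/
def muTerm (S : Summary R) : Term R V → Term R V
  | .res r => .res (appMu S r)
  | .var x => .var x

/-- `μ` applied to an atom. -/
def muAtom (S : Summary R) (a : Atom R V) : Atom R V :=
  (muTerm S a.1, muTerm S a.2.1, muTerm S a.2.2)

/-- `μ(q)`: the CQ obtained by applying `μ` to every atom of `q`. -/
def muQ (S : Summary R) (q : CQ R V) : CQ R V := q.image (muAtom S)

/- ## Partitions of a query -/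

/-- A partition of a CQ `q`: mutually disjoint nonempty subsets of `q` covering `q`. -/
def IsPartition (q : CQ R V) (P : Finset (CQ R V)) : Prop :=
  (∀ u ∈ P, u.Nonempty) ∧ (∀ u ∈ P, ∀ u' ∈ P, u ≠ u' → Disjoint u u') ∧ P.biUnion id = q

/-- The edges of the term graph `G_P`. -/
def edgeRel (P : Finset (CQ R V)) (t t' : Term R V) : Prop :=
  ∃ u ∈ P, ∃ a ∈ u, ∃ a' ∈ u,
    (t = a.1 ∧ t' = a'.1) ∨ (t = a.2.1 ∧ t' = a'.2.1) ∨ (t = a.2.2 ∧ t' = a'.2.2)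

/-- Reachability in the term graph `G_P`. -/
def reach (P : Finset (CQ R V)) (t t' : Term R V) : Prop := Relation.EqvGen (edgeRel P) t t'

/-- `P` is unifiable: no two distinct resources of `q` are connected in `G_P`. -/
def UnifiablePart (q : CQ R V) (P : Finset (CQ R V)) : Prop :=
  ∀ r r' : R, Term.res r ∈ termsQ q → Term.res r' ∈ termsQ q →
    reach P (Term.res r) (Term.res r') → r = r'

/-- The partition base `B` of `q`: all unifiable partitions of `q`. -/
def pbase (q : CQ R V) : Set (Finset (CQ R V)) := {P | IsPartition q P ∧ UnifiablePart q P}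

/-- The partial order `⪯` on partitions. -/
def pref (P P' : Finset (CQ R V)) : Prop := ∀ u ∈ P, ∃ u' ∈ P', u ⊆ u'

/-- The strict order `≺` on partitions. -/
def sPref (P P' : Finset (CQ R V)) : Prop := pref P P' ∧ P ≠ P'

/-- Chains from `P` to `P'` in the partition base of `q` (as nonempty lists
`[P = P_0, …, P_ℓ = P']`; the length of the chain is the list length minus one). -/
def chainSet (q : CQ R V) (P P' : Finset (CQ R V)) : Set (List (Finset (CQ R V))) :=
  {l | l ≠ [] ∧ l.Chain' sPref ∧ (∀ X ∈ l, X ∈ pbase q) ∧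
    l.head? = some P ∧ l.getLast? = some P'}

/-- `K(P, P')`: the number of even-length chains minus the number of odd-length chains. -/
noncomputable def Kcoef (q : CQ R V) (P P' : Finset (CQ R V)) : ℤ :=
  ({l ∈ chainSet q P P' | Even (l.length - 1)}.ncard : ℤ)
    - ({l ∈ chainSet q P P' | Odd (l.length - 1)}.ncard : ℤ)

/-- `σ_P`: maps each variable `x` of `q` to the `≤`-least term reachable from `x` in `G_P`. -/
noncomputable def sigmaP [LinearOrder (Term R V)] (q : CQ R V) (P : Finset (CQ R V)) (x : V) :
    Term R V :=
  if h : ((termsQ q).filter (fun t => reach P (Term.var x) t)).Nonempty then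
    ((termsQ q).filter (fun t => reach P (Term.var x) t)).min' h
  else Term.var x

/-- The answer `τ` to `μ(q)` on `H` satisfies the partition `P`. -/
def satisfiesP [LinearOrder (Term R V)] (S : Summary R) (q : CQ R V) (τ : V → Option R)
    (P : Finset (CQ R V)) : Prop :=
  P ∈ pbase q ∧ ∀ x ∈ varsQ q,
    (∀ y, sigmaP q P x = Term.var y → τ x = τ y) ∧
    (∀ r, sigmaP q P x = Term.res r → τ x = some (appMu S r))

/-- `B_τ`: the partitions of the partition base satisfied by `τ`. -/
def Btau [LinearOrder (Term R V)] (S : Summary R) (q : CQ R V) (τ : V → Option R) :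
    Set (Finset (CQ R V)) := {P | satisfiesP S q τ P}

/-- The variables occurring in the range of `σ_P`. -/
noncomputable def vrngP [LinearOrder (Term R V)] (q : CQ R V) (P : Finset (CQ R V)) : Finset V :=
  (varsQ q).filter (fun y => ∃ x ∈ varsQ q, sigmaP q P x = Term.var y)

/-- The `S`-size of an optional bucket. -/
def sizeOpt (S : Summary R) (o : Option R) : ℕ := o.elim 0 (size1 S)

/-- `c(τ, P) = ∏_{x ∈ vrng(σ_P)} size_S(τ(x))`. -/
noncomputable def cCoef [LinearOrder (Term R V)] (S : Summary R) (q : CQ R V)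
    (τ : V → Option R) (P : Finset (CQ R V)) : ℕ :=
  ∏ y ∈ vrngP q P, sizeOpt S (τ y)

/-- `τ(μ(q))`. -/
noncomputable def tauMuQ [Inhabited R] (S : Summary R) (q : CQ R V) (τ : V → Option R) :
    RDFGraph R := (muQ S q).image (appAtomD τ)

/-- `n_h = |{u ∈ P : τ(μ(u)) = {h}}|`. -/
noncomputable def nCount [Inhabited R] (S : Summary R) (τ : V → Option R)
    (P : Finset (CQ R V)) (h : R × R × R) : ℕ :=
  (P.filter (fun u => u.image (fun a => appAtomD τ (muAtom S a)) = ({h} : Finset (R × R × R)))).card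

/-- `F(τ, P)`, defined via falling factorials. -/
noncomputable def Fcoef [Inhabited R] (S : Summary R) (q : CQ R V) (τ : V → Option R)
    (P : Finset (CQ R V)) : ℝ :=
  if ∀ h ∈ tauMuQ S q τ, nCount S τ P h ≤ S.w h then
    ∏ h ∈ tauMuQ S q τ,
      ((S.w h).descFactorial (nCount S τ P h) : ℝ) / ((size3 S h).descFactorial (nCount S τ P h) : ℝ)
  else 0

/-- `Exp_τ(P)`: the `τ`-expansions to `P`. -/
def ExpSet [LinearOrder (Term R V)] (S : Summary R) (q : CQ R V) (τ : V → Option R)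
    (P : Finset (CQ R V)) : Set (V → Option R) :=
  {π | (∀ x, (π x).isSome ↔ x ∈ varsQ q) ∧ (∀ x r, π x = some r → r ∈ S.dom) ∧
    ∀ x ∈ varsQ q,
      Option.map (appMu S) (π x) = τ x ∧
      (∀ y, sigmaP q P x = Term.var y → π x = π y) ∧
      (∀ r, sigmaP q P x = Term.res r → π x = some r)}

/-- `MaxExp_τ(P)`: the `τ`-expansions to `P` that are not `τ`-expansions to any `P' ≻ P`. -/
def MaxExp [LinearOrder (Term R V)] (S : Summary R) (q : CQ R V) (τ : V → Option R)
    (P : Finset (CQ R V)) : Set (V → Option R) :=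
  {π ∈ ExpSet S q τ P | ¬ ∃ P' ∈ Btau S q τ, sPref P P' ∧ π ∈ ExpSet S q τ P'}

/- ## Renaming, unification, q-error -/

def renTerm (ρ : V → V) : Term R V → Term R V
  | .res r => .res r
  | .var x => .var (ρ x)

/-- `ρ(q)`: renaming of the variables of `q` along `ρ`. -/
def renameQ (ρ : V → V) (q : CQ R V) : CQ R V :=
  q.image (fun a => (renTerm ρ a.1, renTerm ρ a.2.1, renTerm ρ a.2.2))

/-- Application of a variable-to-term substitution `κ` to a term. -/
def appK (κ : V → Term R V) : Term R V → Term R V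
  | .res r => .res r
  | .var x => κ x

/-- Two atoms are unifiable if some substitution `κ` makes them equal. -/
def unifAtoms (a1 a2 : Atom R V) : Prop :=
  ∃ κ : V → Term R V,
    (appK κ a1.1, appK κ a1.2.1, appK κ a1.2.2) = (appK κ a2.1, appK κ a2.2.1, appK κ a2.2.2)

/-- `q` is `μ`-unification-free: no two distinct atoms of `μ(q)` are unifiable. -/
def muUnifFree (S : Summary R) (q : CQ R V) : Prop :=
  ∀ a1 ∈ muQ S q, ∀ a2 ∈ muQ S q, a1 ≠ a2 → ¬ unifAtoms a1 a2

/-- The q-error of estimating a cardinality `N` as `E`. -/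
noncomputable def qerror (N E : ℝ) : ℝ := max (max N 1 / max E 1) (max E 1 / max N 1)

/-- A triple of resources viewed as a (variable-free) atom. -/
def resAtom (t : R × R × R) : Atom R V := (Term.res t.1, Term.res t.2.1, Term.res t.2.2)

/-- `μ⁻¹(h)`: the triples over `dom(μ)` that summarise as `h`. -/
def preim (S : Summary R) (h : R × R × R) : Finset (R × R × R) :=
  (S.dom ×ˢ S.dom ×ˢ S.dom).filter (fun t => muT S t = h)

section AuxMaxExp

variable {R V : Type} [DecidableEq R] [DecidableEq V] [Inhabited R] [LinearOrder (Term R V)]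

lemma aux_var_mem {q : CQ R V} {x : V} (h : (Term.var x : Term R V) ∈ termsQ q) :
    x ∈ varsQ q := by
  obtain ⟨a, ha, hmem⟩ := Finset.mem_biUnion.1 h
  refine Finset.mem_biUnion.2 ⟨a, ha, ?_⟩
  simp only [Finset.mem_insert, Finset.mem_singleton] at hmem
  rcases hmem with h1 | h1 | h1 <;> simp [varsA, varsT, ← h1]

lemma aux_block_sub {q : CQ R V} {P : Finset (CQ R V)} (hp : IsPartition q P)
    {u : CQ R V} (hu : u ∈ P) : u ⊆ q := by
  intro a ha
  rw [← hp.2.2]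
  exact Finset.mem_biUnion.2 ⟨u, hu, ha⟩

lemma aux_mem_terms {q : CQ R V} {a : Atom R V} (ha : a ∈ q) :
    a.1 ∈ termsQ q ∧ a.2.1 ∈ termsQ q ∧ a.2.2 ∈ termsQ q :=
  ⟨Finset.mem_biUnion.2 ⟨a, ha, by simp⟩,
   Finset.mem_biUnion.2 ⟨a, ha, by simp⟩,
   Finset.mem_biUnion.2 ⟨a, ha, by simp⟩⟩

lemma aux_var_res (hord : ∀ (r : R) (y : V), (Term.res r : Term R V) < Term.var y)
    {S : Summary R} {q : CQ R V} {τ π : V → Option R} {P : Finset (CQ R V)}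
    (hPb : P ∈ pbase q) (hπ : π ∈ ExpSet S q τ P)
    {x : V} {r : R} (hx : (Term.var x : Term R V) ∈ termsQ q)
    (hr : (Term.res r : Term R V) ∈ termsQ q)
    (hreach : reach P (Term.var x) (Term.res r)) : π x = some r := by
  have hmemF : (Term.res r : Term R V) ∈ (termsQ q).filter (fun t => reach P (Term.var x) t) :=
    Finset.mem_filter.2 ⟨hr, hreach⟩
  have hne : ((termsQ q).filter (fun t => reach P (Term.var x) t)).Nonempty := ⟨_, hmemF⟩
  have hsig : sigmaP q P x = ((termsQ q).filter (fun t => reach P (Term.var x) t)).min' hne := by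
    rw [sigmaP, dif_pos hne]
  have hminmem := Finset.min'_mem _ hne
  have hminle := Finset.min'_le _ _ hmemF
  cases hmin : ((termsQ q).filter (fun t => reach P (Term.var x) t)).min' hne with
  | var z =>
      rw [hmin] at hminle
      exact absurd hminle (not_le.2 (hord r z))
  | res r' =>
      rw [hmin] at hminmem hsig
      obtain ⟨hr'mem, hr'reach⟩ := Finset.mem_filter.1 hminmem
      have heq : r' = r :=
        hPb.2 r' r hr'mem hr
          (Relation.EqvGen.trans _ _ _ (Relation.EqvGen.symm _ _ hr'reach) hreach)
      subst heq
      exact (hπ.2.2 x (aux_var_mem hx)).2.2 r' hsig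

lemma aux_var_var {S : Summary R} {q : CQ R V} {τ π : V → Option R} {P : Finset (CQ R V)}
    (hπ : π ∈ ExpSet S q τ P)
    {x y : V} (hx : (Term.var x : Term R V) ∈ termsQ q)
    (hy : (Term.var y : Term R V) ∈ termsQ q)
    (hreach : reach P (Term.var x) (Term.var y)) : π x = π y := by
  have hset : (termsQ q).filter (fun t => reach P (Term.var x) t)
      = (termsQ q).filter (fun t => reach P (Term.var y) t) := by
    ext s
    simp only [Finset.mem_filter, and_congr_right_iff]
    intro _
    constructor
    · intro h; exact Relation.EqvGen.trans _ _ _ (Relation.EqvGen.symm _ _ hreach) h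
    · intro h; exact Relation.EqvGen.trans _ _ _ hreach h
  have hne : ((termsQ q).filter (fun t => reach P (Term.var y) t)).Nonempty :=
    ⟨Term.var y, Finset.mem_filter.2 ⟨hy, Relation.EqvGen.refl _⟩⟩
  have hsigy : sigmaP q P y = ((termsQ q).filter (fun t => reach P (Term.var y) t)).min' hne := by
    rw [sigmaP, dif_pos hne]
  have hsigx : sigmaP q P x = ((termsQ q).filter (fun t => reach P (Term.var y) t)).min' hne := by
    rw [sigmaP]
    rw [dif_pos (hset ▸ hne)]
    congr 1
  have hx' := (hπ.2.2 x (aux_var_mem hx)).2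
  have hy' := (hπ.2.2 y (aux_var_mem hy)).2
  cases hmin : ((termsQ q).filter (fun t => reach P (Term.var y) t)).min' hne with
  | var z =>
      rw [hx'.1 z (by rw [hsigx, hmin]), hy'.1 z (by rw [hsigy, hmin])]
  | res r =>
      rw [hx'.2 r (by rw [hsigx, hmin]), hy'.2 r (by rw [hsigy, hmin])]

lemma aux_reach_eq (hord : ∀ (r : R) (y : V), (Term.res r : Term R V) < Term.var y)
    {S : Summary R} {q : CQ R V} {τ π : V → Option R} {P : Finset (CQ R V)}
    (hPb : P ∈ pbase q) (hπ : π ∈ ExpSet S q τ P)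
    {t t' : Term R V} (ht : t ∈ termsQ q) (ht' : t' ∈ termsQ q)
    (h : reach P t t') : appTD π t = appTD π t' := by
  cases t with
  | res r =>
    cases t' with
    | res r' =>
        have := hPb.2 r r' ht ht' h
        simp [appTD, appT, this]
    | var y =>
        have := aux_var_res hord hPb hπ ht' ht (Relation.EqvGen.symm _ _ h)
        simp [appTD, appT, this]
  | var x =>
    cases t' with
    | res r' =>
        have := aux_var_res hord hPb hπ ht ht' h
        simp [appTD, appT, this]
    | var y =>
        have := aux_var_var hπ ht ht' h
        simp [appTD, appT, this]

end AuxMaxExp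

/-- For every `τ`-expansion `π` to `P ∈ B_τ`, there is exactly one
partition `P' ∈ B_τ` with `P ⪯ P'` and `π ∈ MaxExp_τ(P')`. -/
theorem exists_unique_maxExp {R V : Type} [DecidableEq R] [DecidableEq V] [Inhabited R]
    [LinearOrder (Term R V)]
    (hord : ∀ (r : R) (y : V), (Term.res r : Term R V) < Term.var y)
    (S : Summary R) (q : CQ R V) (hq : resQ q ⊆ S.dom)
    (τ : V → Option R) (hτ : τ ∈ ansSet (muQ S q) S.H)
    (P : Finset (CQ R V)) (hP : P ∈ Btau S q τ)
    (π : V → Option R) (hπ : π ∈ ExpSet S q τ P) :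
    ∃! P', P' ∈ Btau S q τ ∧ pref P P' ∧ π ∈ MaxExp S q τ P' := by
  classical
  have hPb : P ∈ pbase q := hP.1
  have hπ1 := hπ.1
  have hπ2 := hπ.2.1
  have hπ3 := hπ.2.2
  set Pstar : Finset (CQ R V) :=
    q.image (fun a => q.filter (fun b => appAtomD π b = appAtomD π a)) with hPs
  have hblock : ∀ a ∈ q, a ∈ q.filter (fun b => appAtomD π b = appAtomD π a) :=
    fun a ha => Finset.mem_filter.2 ⟨ha, rfl⟩
  -- Pstar is a partition of q
  have hpart : IsPartition q Pstar := by
    refine ⟨?_, ?_, ?_⟩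
    · intro u hu
      obtain ⟨a, ha, rfl⟩ := Finset.mem_image.1 hu
      exact ⟨a, hblock a ha⟩
    · intro u hu u' hu' hne
      obtain ⟨a, ha, rfl⟩ := Finset.mem_image.1 hu
      obtain ⟨a', ha', rfl⟩ := Finset.mem_image.1 hu'
      rw [Finset.disjoint_left]
      intro b hb hb'
      obtain ⟨hbq, hba⟩ := Finset.mem_filter.1 hb
      obtain ⟨_, hba'⟩ := Finset.mem_filter.1 hb'
      apply hne
      have hfe : appAtomD π a = appAtomD π a' := by rw [← hba, hba']
      rw [hfe]
    · ext a
      simp only [Finset.mem_biUnion, id]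
      constructor
      · rintro ⟨u, hu, hau⟩
        obtain ⟨b, hb, rfl⟩ := Finset.mem_image.1 hu
        exact (Finset.mem_filter.1 hau).1
      · intro ha
        exact ⟨_, Finset.mem_image_of_mem _ ha, hblock a ha⟩
  -- edges of Pstar preserve appTD π
  have hstar_edge : ∀ t t', edgeRel Pstar t t' → appTD π t = appTD π t' := by
    rintro t t' ⟨u, hu, a, ha, a', ha', hpos⟩
    obtain ⟨a₀, _, rfl⟩ := Finset.mem_image.1 hu
    have h1 : appAtomD π a = appAtomD π a₀ := (Finset.mem_filter.1 ha).2
    have h2 : appAtomD π a' = appAtomD π a₀ := (Finset.mem_filter.1 ha').2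
    have hff : appAtomD π a = appAtomD π a' := h1.trans h2.symm
    rcases hpos with ⟨e1, e2⟩ | ⟨e1, e2⟩ | ⟨e1, e2⟩ <;> subst e1 <;> subst e2
    · exact congrArg Prod.fst hff
    · exact congrArg (fun p => p.2.1) hff
    · exact congrArg (fun p => p.2.2) hff
  have hstar_reach : ∀ t t', reach Pstar t t' → appTD π t = appTD π t' := by
    intro t t' h
    induction h with
    | rel a b h => exact hstar_edge a b h
    | refl a => rfl
    | symm a b _ ih => exact ih.symm
    | trans a b c _ _ ih1 ih2 => exact ih1.trans ih2
  have hunif : UnifiablePart q Pstar := by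
    intro r r' _ _ h
    have := hstar_reach _ _ h
    simpa [appTD, appT] using this
  have hPsb : Pstar ∈ pbase q := ⟨hpart, hunif⟩
  -- sigma facts for Pstar
  have hsome : ∀ x ∈ varsQ q, ∃ rx, π x = some rx := by
    intro x hx
    exact Option.isSome_iff_exists.1 ((hπ1 x).2 hx)
  have hsig_res : ∀ x ∈ varsQ q, ∀ r, sigmaP q Pstar x = Term.res r → π x = some r := by
    intro x hx r hs
    by_cases hne : ((termsQ q).filter (fun t => reach Pstar (Term.var x) t)).Nonempty
    · rw [sigmaP, dif_pos hne] at hs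
      have hmem := Finset.min'_mem _ hne
      rw [hs] at hmem
      have hre : reach Pstar (Term.var x) (Term.res r) := (Finset.mem_filter.1 hmem).2
      have heq := hstar_reach _ _ hre
      obtain ⟨rx, hrx⟩ := hsome x hx
      simp [appTD, appT, hrx] at heq
      rw [hrx, heq]
    · rw [sigmaP, dif_neg hne] at hs
      exact absurd hs (by simp)
  have hsig_var : ∀ x ∈ varsQ q, ∀ y, sigmaP q Pstar x = Term.var y → π x = π y := by
    intro x hx y hs
    by_cases hne : ((termsQ q).filter (fun t => reach Pstar (Term.var x) t)).Nonempty
    · rw [sigmaP, dif_pos hne] at hs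
      have hmem := Finset.min'_mem _ hne
      rw [hs] at hmem
      obtain ⟨hyt, hre⟩ := Finset.mem_filter.1 hmem
      have hy : y ∈ varsQ q := aux_var_mem hyt
      have heq := hstar_reach _ _ hre
      obtain ⟨rx, hrx⟩ := hsome x hx
      obtain ⟨ry, hry⟩ := hsome y hy
      simp [appTD, appT, hrx, hry] at heq
      rw [hrx, hry, heq]
    · rw [sigmaP, dif_neg hne] at hs
      rw [Term.var.inj hs]
  have hExpStar : π ∈ ExpSet S q τ Pstar :=
    ⟨hπ1, hπ2, fun x hx => ⟨(hπ3 x hx).1, hsig_var x hx, hsig_res x hx⟩⟩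
  -- Pstar ∈ Btau
  have hBstar : Pstar ∈ Btau S q τ := by
    refine ⟨hPsb, fun x hx => ⟨?_, ?_⟩⟩
    · intro y hy
      by_cases hne : ((termsQ q).filter (fun t => reach Pstar (Term.var x) t)).Nonempty
      · have hy' : y ∈ varsQ q := by
          have hs := hy
          rw [sigmaP, dif_pos hne] at hs
          have hmem := Finset.min'_mem _ hne
          rw [hs] at hmem
          exact aux_var_mem (Finset.mem_filter.1 hmem).1
        have hxy := hsig_var x hx y hy
        rw [← (hπ3 x hx).1, ← (hπ3 y hy').1, hxy]
      · have hs := hy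
        rw [sigmaP, dif_neg hne] at hs
        rw [Term.var.inj hs]
    · intro r hr
      have hxr := hsig_res x hx r hr
      rw [← (hπ3 x hx).1, hxr]
      rfl
  -- every partition admitting π as expansion refines Pstar
  have hpref_star : ∀ P' ∈ pbase q, π ∈ ExpSet S q τ P' → pref P' Pstar := by
    intro P' hP'b hπ' u hu
    obtain ⟨a₀, ha₀⟩ := hP'b.1.1 u hu
    have ha₀q : a₀ ∈ q := aux_block_sub hP'b.1 hu ha₀
    refine ⟨q.filter (fun b => appAtomD π b = appAtomD π a₀),
      Finset.mem_image_of_mem _ ha₀q, ?_⟩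
    intro a ha
    have haq : a ∈ q := aux_block_sub hP'b.1 hu ha
    refine Finset.mem_filter.2 ⟨haq, ?_⟩
    have e1 : edgeRel P' a.1 a₀.1 := ⟨u, hu, a, ha, a₀, ha₀, Or.inl ⟨rfl, rfl⟩⟩
    have e2 : edgeRel P' a.2.1 a₀.2.1 := ⟨u, hu, a, ha, a₀, ha₀, Or.inr (Or.inl ⟨rfl, rfl⟩)⟩
    have e3 : edgeRel P' a.2.2 a₀.2.2 := ⟨u, hu, a, ha, a₀, ha₀, Or.inr (Or.inr ⟨rfl, rfl⟩)⟩
    have ta := aux_mem_terms haq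
    have ta0 := aux_mem_terms ha₀q
    have g1 := aux_reach_eq hord hP'b hπ' ta.1 ta0.1 (Relation.EqvGen.rel _ _ e1)
    have g2 := aux_reach_eq hord hP'b hπ' ta.2.1 ta0.2.1 (Relation.EqvGen.rel _ _ e2)
    have g3 := aux_reach_eq hord hP'b hπ' ta.2.2 ta0.2.2 (Relation.EqvGen.rel _ _ e3)
    show appAtomD π a = appAtomD π a₀
    simp only [appAtomD, g1, g2, g3]
  -- antisymmetry of pref on partitions
  have hanti : ∀ P1 P2 : Finset (CQ R V), IsPartition q P1 → IsPartition q P2 →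
      pref P1 P2 → pref P2 P1 → P1 = P2 := by
    have key : ∀ P1 P2 : Finset (CQ R V), IsPartition q P1 →
        pref P1 P2 → pref P2 P1 → P1 ⊆ P2 := by
      intro P1 P2 h1 h12 h21 u hu
      obtain ⟨u', hu', hsub1⟩ := h12 u hu
      obtain ⟨u'', hu'', hsub2⟩ := h21 u' hu'
      have huu'' : u = u'' := by
        by_contra hne
        obtain ⟨a, ha⟩ := h1.1 u hu
        exact (Finset.disjoint_left.1 (h1.2.1 u hu u'' hu'' hne)) ha (hsub2 (hsub1 ha))
      have hu'u : u' = u := Finset.Subset.antisymm (huu'' ▸ hsub2) hsub1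
      rwa [← hu'u]
    intro P1 P2 h1 h2 h12 h21
    exact Finset.Subset.antisymm (key P1 P2 h1 h12 h21) (key P2 P1 h2 h21 h12)
  have hprefP : pref P Pstar := hpref_star P hPb hπ
  have hmax : π ∈ MaxExp S q τ Pstar := by
    refine ⟨hExpStar, ?_⟩
    rintro ⟨P'', hP''B, hsp, hExp''⟩
    have hpp := hpref_star P'' hP''B.1 hExp''
    exact hsp.2 (hanti Pstar P'' hpart hP''B.1.1 hsp.1 hpp)
  refine ⟨Pstar, ⟨hBstar, hprefP, hmax⟩, ?_⟩
  rintro P' ⟨hP'B, _, hP'max⟩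
  have hExp' : π ∈ ExpSet S q τ P' := hP'max.1
  have hpp : pref P' Pstar := hpref_star P' hP'B.1 hExp'
  by_contra hne
  exact hP'max.2 ⟨Pstar, hBstar, ⟨hpp, hne⟩, hExpStar⟩
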